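/- Let g(λ) = E[1(λ r^C < r^D)(r^D − λ r^C)] + λ E[r^C] − λ r_th. If λ* = min{λ ≥ 0 : E[r^C 1(λ r^C ≥ r^D)] ≥ r_th}, then for all 0 < Δλ ≤ λ*: g(λ*) ≤ g(λ* − Δλ), i.e., g is nonincreasing to the left of λ*. -/

import Mathlib

/-!
With `h(λ) = E[r^C 1(r^D ≤ λ r^C)]`, the pointwise inequality
`(r^D - b r^C)⁺ ≤ (r^D - a r^C)⁺ + (b - a)(r^C 1(r^D ≤ b r^C) - r^C)` for `a ≤ b` integrates to
`g(b) ≤ g(a) + (b - a)(h(b) - r_th)`. Below `λ*` minimality gives `h < r_th`, so `g` is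
nonincreasing on `[λ* - Δλ, λ*)`; the same inequality with `b = λ*` and `a ↑ λ*` passes to `λ*`.
-/

open MeasureTheory Set Filter Topology

/-- The Lagrange dual function `g(λ) = E[1(λ r^C < r^D)(r^D − λ r^C)] + λ E[r^C] − λ r_th`. -/
noncomputable def dualFn {S : Type*} [MeasurableSpace S] (μ : Measure S)
    (rC rD : S → ℝ) (rth : ℝ) (l : ℝ) : ℝ :=
  (∫ s, ({s | l * rC s < rD s}.indicator (fun s => rD s - l * rC s)) s ∂μ) +
    l * (∫ s, rC s ∂μ) - l * rth

lemma max_sub_mul_le_of_le {a b c d : ℝ} (hab : a ≤ b) (hc : 0 ≤ c) :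
    max (d - b * c) 0 ≤ max (d - a * c) 0 + (b - a) * ((if d ≤ b * c then c else 0) - c) := by
  have hac : a * c ≤ b * c := mul_le_mul_of_nonneg_right hab hc
  split_ifs with h
  · simp only [sub_self, mul_zero, add_zero, max_eq_right (sub_nonpos.2 h), le_max_right]
  · rw [max_eq_left (by linarith), max_eq_left (by linarith)]
    linarith

section

variable {S : Type*} [MeasurableSpace S] {μ : Measure S} {rC rD : S → ℝ}

lemma integrable_indicator_le_mul (hCi : Integrable rC μ) (hDi : Integrable rD μ) (l : ℝ) :
    Integrable ({s | rD s ≤ l * rC s}.indicator rC) μ :=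
  hCi.indicator₀ (hDi.1.nullMeasurableSet_le (hCi.1.const_mul l))

lemma dualFn_eq_integral_max (rth l : ℝ) :
    dualFn μ rC rD rth l = ∫ s, max (rD s - l * rC s) 0 ∂μ + l * (∫ s, rC s ∂μ) - l * rth := by
  unfold dualFn
  congr 3 with s
  by_cases h : s ∈ {s | l * rC s < rD s}
  · rw [indicator_of_mem h, max_eq_left (sub_pos.2 h).le]
  · rw [indicator_of_notMem h, max_eq_right (sub_nonpos.2 (not_lt.1 h))]

lemma dualFn_le_add_mul (hC : ∀ s, 0 ≤ rC s) (hCi : Integrable rC μ) (hDi : Integrable rD μ)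
    (rth : ℝ) {a b : ℝ} (hab : a ≤ b) :
    dualFn μ rC rD rth b ≤ dualFn μ rC rD rth a +
      (b - a) * ((∫ s, ({s | rD s ≤ b * rC s}.indicator rC) s ∂μ) - rth) := by
  have hind := integrable_indicator_le_mul hCi hDi b
  have hmax : ∀ l : ℝ, Integrable (fun s => max (rD s - l * rC s) 0) μ := fun l =>
    (hDi.sub (hCi.const_mul l)).pos_part
  have hint : ∫ s, max (rD s - b * rC s) 0 ∂μ ≤ ∫ s, (max (rD s - a * rC s) 0 +
      (b - a) * ({s | rD s ≤ b * rC s}.indicator rC s - rC s)) ∂μ := by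
    refine integral_mono (hmax b) ((hmax a).add ((hind.sub hCi).const_mul _)) fun s => ?_
    simpa only [indicator_apply, mem_ofPred_eq] using max_sub_mul_le_of_le (d := rD s) hab (hC s)
  rw [integral_add (hmax a) (g := fun s => (b - a) * (_ - rC s)) ((hind.sub hCi).const_mul _),
    integral_const_mul,
    integral_sub hind hCi] at hint
  rw [dualFn_eq_integral_max, dualFn_eq_integral_max]
  linarith

lemma dualFn_le_of_integral_indicator_le (hC : ∀ s, 0 ≤ rC s) (hCi : Integrable rC μ)
    (hDi : Integrable rD μ) {rth a b : ℝ} (hab : a ≤ b)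
    (hb : ∫ s, ({s | rD s ≤ b * rC s}.indicator rC) s ∂μ ≤ rth) :
    dualFn μ rC rD rth b ≤ dualFn μ rC rD rth a :=
  (dualFn_le_add_mul hC hCi hDi rth hab).trans <|
    add_le_of_nonpos_right (mul_nonpos_of_nonneg_of_nonpos (sub_nonneg.2 hab) (sub_nonpos.2 hb))

end

theorem stmt12_general {S : Type*} [MeasurableSpace S] (μ : Measure S)
    (rC rD : S → ℝ) (hC : ∀ s, 0 ≤ rC s)
    (hCi : Integrable rC μ) (hDi : Integrable rD μ)
    (rth : ℝ) (lstar : ℝ)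
    (hmin : ∀ l : ℝ, 0 ≤ l →
      rth ≤ ∫ s, ({s | rD s ≤ l * rC s}.indicator rC) s ∂μ → lstar ≤ l) :
    ∀ Δ : ℝ, 0 < Δ → Δ ≤ lstar → dualFn μ rC rD rth lstar ≤ dualFn μ rC rD rth (lstar - Δ) := by
  intro Δ hΔ hΔl
  set g := dualFn μ rC rD rth
  set K := (∫ s, ({s | rD s ≤ lstar * rC s}.indicator rC) s ∂μ) - rth
  have hleft : ∀ l ∈ Ico (lstar - Δ) lstar, g l ≤ g (lstar - Δ) := fun l hl => by
    refine dualFn_le_of_integral_indicator_le hC hCi hDi hl.1 (le_of_not_ge fun hge => ?_)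
    exact hl.2.not_ge (hmin l (by linarith [hl.1]) hge)
  have hnear : ∀ l ∈ Ico (lstar - Δ) lstar, g lstar ≤ g (lstar - Δ) + (lstar - l) * K :=
    fun l hl => (dualFn_le_add_mul hC hCi hDi rth hl.2.le).trans (by linarith [hleft l hl])
  have hlim : Tendsto (fun l => g (lstar - Δ) + (lstar - l) * K) (𝓝[<] lstar)
      (𝓝 (g (lstar - Δ))) := by
    refine tendsto_nhdsWithin_of_tendsto_nhds ?_
    have hcont : Continuous fun l => g (lstar - Δ) + (lstar - l) * K := by fun_prop
    simpa using hcont.tendsto lstar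
  exact ge_of_tendsto hlim (eventually_of_mem (Ico_mem_nhdsLT (by linarith)) hnear)

/-- `g` is nonincreasing to the left of `λ*`. -/
theorem stmt12 {S : Type*} [MeasurableSpace S] (μ : Measure S) [IsProbabilityMeasure μ]
    (rC rD : S → ℝ) (hC : ∀ s, 0 ≤ rC s) (hD : ∀ s, 0 ≤ rD s)
    (hCi : Integrable rC μ) (hDi : Integrable rD μ)
    (rth : ℝ) (hrth : 0 < rth) (lstar : ℝ) (hl0 : 0 ≤ lstar)
    (hmem : rth ≤ ∫ s, ({s | rD s ≤ lstar * rC s}.indicator rC) s ∂μ)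
    (hmin : ∀ l : ℝ, 0 ≤ l →
      rth ≤ ∫ s, ({s | rD s ≤ l * rC s}.indicator rC) s ∂μ → lstar ≤ l) :
    ∀ Δ : ℝ, 0 < Δ → Δ ≤ lstar → dualFn μ rC rD rth lstar ≤ dualFn μ rC rD rth (lstar - Δ) :=
  stmt12_general μ rC rD hC hCi hDi rth lstar hmin
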